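/- arXiv:0901.1315 — 2 statements merged into one kernel-verified Lean document; each statement's English description precedes it below -/
import Mathlib

section
/- Fix μ ∈ ℝ, σ > 0, y₀ ∈ ℝ and y ∈ ℝ, and for a < b define q(y, a, b | y₀) = (1/(√(2π) σ)) exp(−(μ² − 2μ(y − y₀))/(2σ²)) Σ_{n∈ℤ} (exp(−d₁(n)) − exp(−d₂(n))), where d₁(n) = (y − y₀ − 2n(b − a))²/(2σ²) and d₂(n) = (y + y₀ − 2a − 2n(b − a))²/(2σ²). Then for all a < min(y, y₀) and b > max(y, y₀), the mixed second partial derivative of q in (a, b) exists and satisfies −∂²q/(∂a ∂b) (y, a, b | y₀) = (1/(√(2π) σ³)) exp(−(μ² − 2μ(y − y₀))/(2σ²)) Σ_{n∈ℤ} [ 4n² (2 d₁(n) − 1) exp(−d₁(n)) − 4n(n−1) (2 d₂(n) − 1) exp(−d₂(n)) ]. -/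
/-!
Every summand is a Gaussian `exp (-v ^ 2 / (2 σ ^ 2))` evaluated at an affine function `v` of
`(a, b)`, so its first and second derivatives are the Gaussian times a polynomial in `n` and `v`.
For `a < min y y₀` and `max y y₀ < b` both shifts satisfy `|v| ≥ 2 (|n| - 1) (b - a)`. Absorbing the
polynomial in `v` into half of the exponent bounds the `k`-th derivative terms by
`C |n| ^ k ρ ^ |n|` with `ρ < 1`, uniformly as long as `b - a` stays bounded below; these geometric
majorants justify differentiating the series term by term, first in `b` and then in `a`.
-/

open MeasureTheory Filter Set

/-- For `n : ℤ`, the exponent `d₁(n) = (y − y₀ − 2n(b − a))²/(2σ²)`. -/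
noncomputable def d1 (σ y₀ y a b : ℝ) (n : ℤ) : ℝ :=
  (y - y₀ - 2 * (n : ℝ) * (b - a)) ^ 2 / (2 * σ ^ 2)

/-- For `n : ℤ`, the exponent `d₂(n) = (y + y₀ − 2a − 2n(b − a))²/(2σ²)`. -/
noncomputable def d2 (σ y₀ y a b : ℝ) (n : ℤ) : ℝ :=
  (y + y₀ - 2 * a - 2 * (n : ℝ) * (b - a)) ^ 2 / (2 * σ ^ 2)

/-- The function `q(y, a, b | y₀)` (joint cdf integrand). -/
noncomputable def qCHLO (μ σ y₀ a b y : ℝ) : ℝ :=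
  (1 / (Real.sqrt (2 * Real.pi) * σ)) *
    Real.exp (-(μ ^ 2 - 2 * μ * (y - y₀)) / (2 * σ ^ 2)) *
    ∑' n : ℤ, (Real.exp (-(d1 σ y₀ y a b n)) - Real.exp (-(d2 σ y₀ y a b n)))

/-- The claimed value of `−∂²q/(∂a ∂b)`. -/
noncomputable def pCHLO (μ σ y₀ a b y : ℝ) : ℝ :=
  (1 / (Real.sqrt (2 * Real.pi) * σ ^ 3)) *
    Real.exp (-(μ ^ 2 - 2 * μ * (y - y₀)) / (2 * σ ^ 2)) *
    ∑' n : ℤ,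
      (4 * (n : ℝ) ^ 2 * (2 * d1 σ y₀ y a b n - 1) * Real.exp (-(d1 σ y₀ y a b n))
        - 4 * (n : ℝ) * ((n : ℝ) - 1) * (2 * d2 σ y₀ y a b n - 1) *
            Real.exp (-(d2 σ y₀ y a b n)))

open Real

noncomputable section

def qTerm (σ y₀ y a b : ℝ) (n : ℤ) : ℝ :=
  exp (-(d1 σ y₀ y a b n)) - exp (-(d2 σ y₀ y a b n))

def qTermDerivB (σ y₀ y a b : ℝ) (n : ℤ) : ℝ :=
  2 * n / σ ^ 2 * ((y - y₀ - 2 * n * (b - a)) * exp (-(d1 σ y₀ y a b n))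
    - (y + y₀ - 2 * a - 2 * n * (b - a)) * exp (-(d2 σ y₀ y a b n)))

def pTerm (σ y₀ y a b : ℝ) (n : ℤ) : ℝ :=
  4 * (n : ℝ) ^ 2 * (2 * d1 σ y₀ y a b n - 1) * exp (-(d1 σ y₀ y a b n))
    - 4 * (n : ℝ) * ((n : ℝ) - 1) * (2 * d2 σ y₀ y a b n - 1) * exp (-(d2 σ y₀ y a b n))

end

lemma hasDerivAt_exp_neg_sq_div {f : ℝ → ℝ} {f' x : ℝ} (hf : HasDerivAt f f' x) (σ : ℝ) :
    HasDerivAt (fun t => exp (-(f t ^ 2 / (2 * σ ^ 2))))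
      (-(f x * f' / σ ^ 2) * exp (-(f x ^ 2 / (2 * σ ^ 2)))) x := by
  refine (((hf.pow 2).div_const (2 * σ ^ 2)).neg.exp).congr_deriv ?_
  simp only [Pi.neg_apply, Pi.pow_apply, Nat.cast_ofNat]
  ring

lemma hasDerivAt_mul_exp_neg_sq_div {f : ℝ → ℝ} {f' x : ℝ} (hf : HasDerivAt f f' x) (σ : ℝ) :
    HasDerivAt (fun t => f t * exp (-(f t ^ 2 / (2 * σ ^ 2))))
      (f' * (1 - f x ^ 2 / σ ^ 2) * exp (-(f x ^ 2 / (2 * σ ^ 2)))) x := by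
  refine (hf.mul (hasDerivAt_exp_neg_sq_div hf σ)).congr_deriv ?_
  ring

lemma hasDerivAt_qTerm_b (σ y₀ y a b : ℝ) (n : ℤ) :
    HasDerivAt (fun b => qTerm σ y₀ y a b n) (qTermDerivB σ y₀ y a b n) b := by
  have hX : HasDerivAt (fun b => y - y₀ - 2 * n * (b - a)) (-(2 * n)) b := by
    simpa using (((hasDerivAt_id b).sub_const a).const_mul (2 * (n : ℝ))).const_sub (y - y₀)
  have hZ : HasDerivAt (fun b => y + y₀ - 2 * a - 2 * n * (b - a)) (-(2 * n)) b := by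
    simpa using
      (((hasDerivAt_id b).sub_const a).const_mul (2 * (n : ℝ))).const_sub (y + y₀ - 2 * a)
  refine ((hasDerivAt_exp_neg_sq_div hX σ).sub (hasDerivAt_exp_neg_sq_div hZ σ)).congr_deriv ?_
  unfold qTermDerivB d1 d2
  ring

lemma hasDerivAt_qTermDerivB_a (σ y₀ y a b : ℝ) (n : ℤ) :
    HasDerivAt (fun a => qTermDerivB σ y₀ y a b n) (-(pTerm σ y₀ y a b n / σ ^ 2)) a := by
  have hX : HasDerivAt (fun a => y - y₀ - 2 * n * (b - a)) (2 * n) a := by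
    simpa using (((hasDerivAt_id a).const_sub b).const_mul (2 * (n : ℝ))).const_sub (y - y₀)
  have hZ : HasDerivAt (fun a => y + y₀ - 2 * a - 2 * n * (b - a)) (2 * (n - 1)) a := by
    refine ((((hasDerivAt_id a).const_mul 2).const_sub (y + y₀)).sub
      (((hasDerivAt_id a).const_sub b).const_mul (2 * (n : ℝ)))).congr_deriv ?_
    ring
  refine (((hasDerivAt_mul_exp_neg_sq_div hX σ).sub
    (hasDerivAt_mul_exp_neg_sq_div hZ σ)).const_mul (2 * n / σ ^ 2)).congr_deriv ?_
  unfold pTerm d1 d2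
  ring

lemma one_add_mul_exp_neg_le (d : ℝ) : (1 + d) * exp (-d) ≤ 2 * exp (-(d / 2)) := by
  have h : 1 + d ≤ 2 * exp (d / 2) := by linarith [add_one_le_exp (d / 2)]
  calc (1 + d) * exp (-d) ≤ 2 * exp (d / 2) * exp (-d) := by gcongr
    _ = 2 * exp (-(d / 2)) := by rw [mul_assoc, ← exp_add]; ring_nf

lemma abs_mul_exp_neg_sq_div_le {σ : ℝ} (hσ : 0 < σ) (v : ℝ) :
    |v| * exp (-(v ^ 2 / (2 * σ ^ 2))) ≤ 2 * σ * exp (-(v ^ 2 / (2 * σ ^ 2) / 2)) := by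
  have hv : |v| ≤ σ * (1 + v ^ 2 / (2 * σ ^ 2)) := by
    rw [show σ * (1 + v ^ 2 / (2 * σ ^ 2)) = (2 * σ ^ 2 + v ^ 2) / (2 * σ) by field_simp,
      le_div_iff₀ (by positivity)]
    nlinarith [sq_nonneg (|v| - σ), sq_abs v]
  calc |v| * exp (-(v ^ 2 / (2 * σ ^ 2)))
      ≤ σ * ((1 + v ^ 2 / (2 * σ ^ 2)) * exp (-(v ^ 2 / (2 * σ ^ 2)))) := by
        rw [← mul_assoc]; gcongr
    _ ≤ σ * (2 * exp (-(v ^ 2 / (2 * σ ^ 2) / 2))) :=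
        mul_le_mul_of_nonneg_left (one_add_mul_exp_neg_le _) hσ.le
    _ = 2 * σ * exp (-(v ^ 2 / (2 * σ ^ 2) / 2)) := by ring

lemma abs_two_mul_sub_one_mul_exp_neg_le {d : ℝ} (hd : 0 ≤ d) :
    |2 * d - 1| * exp (-d) ≤ 4 * exp (-(d / 2)) := by
  have h : |2 * d - 1| ≤ 2 * (1 + d) := abs_le.2 ⟨by linarith, by linarith⟩
  calc |2 * d - 1| * exp (-d) ≤ 2 * ((1 + d) * exp (-d)) := by rw [← mul_assoc]; gcongr
    _ ≤ 4 * exp (-(d / 2)) := by linarith [one_add_mul_exp_neg_le d]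

lemma exp_neg_le_exp_neg_half {d : ℝ} (hd : 0 ≤ d) : exp (-d) ≤ exp (-(d / 2)) :=
  exp_le_exp.2 (by linarith)

lemma two_mul_natAbs_sub_one_mul_le_abs {s T : ℝ} (hT : 0 ≤ T) (hs : |s| ≤ 2 * T) (n : ℤ) :
    2 * ((n.natAbs : ℝ) - 1) * T ≤ |s - 2 * n * T| := by
  have h := abs_sub_abs_le_abs_sub (2 * n * T) s
  rw [abs_sub_comm, abs_mul, abs_mul, abs_two, abs_of_nonneg hT] at h
  rw [Nat.cast_natAbs, Int.cast_abs]
  linarith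

lemma exp_neg_sq_div_le_geometric {σ c T v : ℝ} (hσ : 0 < σ) (hc : 0 ≤ c) (hT : 0 ≤ T)
    (hcT : c * σ ^ 2 ≤ T ^ 2) {m : ℕ} (hv : 2 * ((m : ℝ) - 1) * T ≤ |v|) :
    exp (-(v ^ 2 / (2 * σ ^ 2) / 2)) ≤ exp c * exp (-c) ^ m := by
  have key : 4 * ((m : ℝ) - 1) * (c * σ ^ 2) ≤ v ^ 2 := by
    rcases m with _ | m
    · push_cast
      nlinarith [sq_nonneg v, mul_nonneg hc (sq_nonneg σ)]
    · push_cast at hv ⊢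
      have hm : (m : ℝ) ≤ m ^ 2 := mod_cast Nat.le_self_pow two_ne_zero m
      have hsq := pow_le_pow_left₀ (by positivity : (0 : ℝ) ≤ 2 * m * T) (by simpa using hv) 2
      rw [sq_abs] at hsq
      nlinarith [mul_le_mul_of_nonneg_left hcT (Nat.cast_nonneg (α := ℝ) m),
        mul_le_mul_of_nonneg_right hm (sq_nonneg T)]
  have h : ((m : ℝ) - 1) * c ≤ v ^ 2 / (2 * σ ^ 2) / 2 := by
    rw [div_div, le_div_iff₀ (by positivity)]
    linarith
  rw [← exp_nat_mul, ← exp_add, exp_le_exp]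
  linarith

lemma summable_natAbs_pow_mul_geometric (k : ℕ) {r : ℝ} (hr₀ : 0 ≤ r) (hr₁ : r < 1) :
    Summable fun n : ℤ => (n.natAbs : ℝ) ^ k * r ^ n.natAbs := by
  have h : Summable fun n : ℕ => (n : ℝ) ^ k * r ^ n :=
    summable_pow_mul_geometric_of_norm_lt_one k (by rwa [norm_of_nonneg hr₀])
  exact Summable.of_nat_of_neg (by simpa using h) (by simpa using h)

lemma sq_div_mul_sq_le {σ δ T : ℝ} (hσ : σ ≠ 0) (hδ : 0 ≤ δ) (hδT : δ ≤ T) :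
    (δ / σ) ^ 2 * σ ^ 2 ≤ T ^ 2 := by
  rw [div_pow, div_mul_cancel₀ _ (pow_ne_zero 2 hσ)]
  exact pow_le_pow_left₀ hδ hδT 2

lemma d1_nonneg (σ y₀ y a b : ℝ) (n : ℤ) : 0 ≤ d1 σ y₀ y a b n := by unfold d1; positivity

lemma d2_nonneg (σ y₀ y a b : ℝ) (n : ℤ) : 0 ≤ d2 σ y₀ y a b n := by unfold d2; positivity

lemma abs_mul_sub_one_le (n : ℤ) : |(n : ℝ) * (n - 1)| ≤ 2 * (n.natAbs : ℝ) ^ 2 := by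
  have hN : (n.natAbs : ℝ) ≤ (n.natAbs : ℝ) ^ 2 := mod_cast Nat.le_self_pow two_ne_zero _
  have h : |(n : ℝ) - 1| ≤ n.natAbs + 1 := by
    rw [Nat.cast_natAbs, Int.cast_abs]
    simpa using abs_sub (n : ℝ) 1
  rw [abs_mul, ← Int.cast_abs, ← Nat.cast_natAbs]
  nlinarith [Nat.cast_nonneg (α := ℝ) n.natAbs]

section Region

variable {σ y₀ y a b c : ℝ}

lemma exp_neg_half_d1_le (hσ : 0 < σ) (ha : a < min y y₀) (hb : max y y₀ < b) (hc : 0 ≤ c)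
    (hcT : c * σ ^ 2 ≤ (b - a) ^ 2) (n : ℤ) :
    exp (-(d1 σ y₀ y a b n / 2)) ≤ exp c * exp (-c) ^ n.natAbs := by
  obtain ⟨hay, hay₀⟩ := lt_min_iff.1 ha
  obtain ⟨hyb, hy₀b⟩ := max_lt_iff.1 hb
  exact exp_neg_sq_div_le_geometric hσ hc (by linarith) hcT
    (two_mul_natAbs_sub_one_mul_le_abs (by linarith) (abs_le.2 ⟨by linarith, by linarith⟩) n)

lemma exp_neg_half_d2_le (hσ : 0 < σ) (ha : a < min y y₀) (hb : max y y₀ < b) (hc : 0 ≤ c)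
    (hcT : c * σ ^ 2 ≤ (b - a) ^ 2) (n : ℤ) :
    exp (-(d2 σ y₀ y a b n / 2)) ≤ exp c * exp (-c) ^ n.natAbs := by
  obtain ⟨hay, hay₀⟩ := lt_min_iff.1 ha
  obtain ⟨hyb, hy₀b⟩ := max_lt_iff.1 hb
  exact exp_neg_sq_div_le_geometric hσ hc (by linarith) hcT
    (two_mul_natAbs_sub_one_mul_le_abs (by linarith) (abs_le.2 ⟨by linarith, by linarith⟩) n)

lemma abs_qTerm_le (hσ : 0 < σ) (ha : a < min y y₀) (hb : max y y₀ < b) (hc : 0 ≤ c)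
    (hcT : c * σ ^ 2 ≤ (b - a) ^ 2) (n : ℤ) :
    |qTerm σ y₀ y a b n| ≤ 2 * exp c * exp (-c) ^ n.natAbs := by
  have h₁ := (exp_neg_le_exp_neg_half (d1_nonneg σ y₀ y a b n)).trans
    (exp_neg_half_d1_le hσ ha hb hc hcT n)
  have h₂ := (exp_neg_le_exp_neg_half (d2_nonneg σ y₀ y a b n)).trans
    (exp_neg_half_d2_le hσ ha hb hc hcT n)
  calc |qTerm σ y₀ y a b n|
      ≤ |exp (-(d1 σ y₀ y a b n))| + |exp (-(d2 σ y₀ y a b n))| := abs_sub _ _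
    _ ≤ 2 * exp c * exp (-c) ^ n.natAbs := by rw [abs_exp, abs_exp]; linarith

lemma abs_qTermDerivB_le (hσ : 0 < σ) (ha : a < min y y₀) (hb : max y y₀ < b) (hc : 0 ≤ c)
    (hcT : c * σ ^ 2 ≤ (b - a) ^ 2) (n : ℤ) :
    |qTermDerivB σ y₀ y a b n| ≤ 8 / σ * exp c * ((n.natAbs : ℝ) * exp (-c) ^ n.natAbs) := by
  set X := y - y₀ - 2 * n * (b - a)
  set Z := y + y₀ - 2 * a - 2 * n * (b - a)
  have h₁ : |X| * exp (-(d1 σ y₀ y a b n)) ≤ 2 * σ * (exp c * exp (-c) ^ n.natAbs) :=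
    (abs_mul_exp_neg_sq_div_le hσ X).trans
      (mul_le_mul_of_nonneg_left (exp_neg_half_d1_le hσ ha hb hc hcT n) (by positivity))
  have h₂ : |Z| * exp (-(d2 σ y₀ y a b n)) ≤ 2 * σ * (exp c * exp (-c) ^ n.natAbs) :=
    (abs_mul_exp_neg_sq_div_le hσ Z).trans
      (mul_le_mul_of_nonneg_left (exp_neg_half_d2_le hσ ha hb hc hcT n) (by positivity))
  have h₃ : |X * exp (-(d1 σ y₀ y a b n)) - Z * exp (-(d2 σ y₀ y a b n))|
      ≤ 4 * σ * (exp c * exp (-c) ^ n.natAbs) := by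
    refine (abs_sub _ _).trans ?_
    rw [abs_mul, abs_mul, abs_exp, abs_exp]
    linarith
  have h₄ : |2 * (n : ℝ) / σ ^ 2| = 2 * n.natAbs / σ ^ 2 := by
    rw [abs_div, abs_mul, abs_two, abs_of_pos (by positivity : 0 < σ ^ 2), Nat.cast_natAbs,
      Int.cast_abs]
  calc |qTermDerivB σ y₀ y a b n|
      = 2 * n.natAbs / σ ^ 2 * |X * exp (-(d1 σ y₀ y a b n)) - Z * exp (-(d2 σ y₀ y a b n))| := by
        rw [qTermDerivB, abs_mul, h₄]
    _ ≤ 2 * n.natAbs / σ ^ 2 * (4 * σ * (exp c * exp (-c) ^ n.natAbs)) := by gcongr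
    _ = 8 / σ * exp c * ((n.natAbs : ℝ) * exp (-c) ^ n.natAbs) := by field_simp; ring

lemma abs_pTerm_le (hσ : 0 < σ) (ha : a < min y y₀) (hb : max y y₀ < b) (hc : 0 ≤ c)
    (hcT : c * σ ^ 2 ≤ (b - a) ^ 2) (n : ℤ) :
    |pTerm σ y₀ y a b n| ≤ 48 * exp c * ((n.natAbs : ℝ) ^ 2 * exp (-c) ^ n.natAbs) := by
  set G := exp c * exp (-c) ^ n.natAbs
  have h₁ : |2 * d1 σ y₀ y a b n - 1| * exp (-(d1 σ y₀ y a b n)) ≤ 4 * G :=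
    (abs_two_mul_sub_one_mul_exp_neg_le (d1_nonneg σ y₀ y a b n)).trans
      (by gcongr; exact exp_neg_half_d1_le hσ ha hb hc hcT n)
  have h₂ : |2 * d2 σ y₀ y a b n - 1| * exp (-(d2 σ y₀ y a b n)) ≤ 4 * G :=
    (abs_two_mul_sub_one_mul_exp_neg_le (d2_nonneg σ y₀ y a b n)).trans
      (by gcongr; exact exp_neg_half_d2_le hσ ha hb hc hcT n)
  have hn : |(n : ℝ) ^ 2| = (n.natAbs : ℝ) ^ 2 := by
    rw [abs_pow, Nat.cast_natAbs, Int.cast_abs]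
  calc |pTerm σ y₀ y a b n|
      ≤ 4 * (n.natAbs : ℝ) ^ 2 * (|2 * d1 σ y₀ y a b n - 1| * exp (-(d1 σ y₀ y a b n)))
        + 4 * |(n : ℝ) * (n - 1)| * (|2 * d2 σ y₀ y a b n - 1| * exp (-(d2 σ y₀ y a b n))) := by
        refine (abs_sub _ _).trans (le_of_eq ?_)
        simp only [abs_mul, abs_exp, hn, abs_of_pos (by norm_num : (0 : ℝ) < 4)]
        ring
    _ ≤ 4 * (n.natAbs : ℝ) ^ 2 * (4 * G) + 4 * (2 * (n.natAbs : ℝ) ^ 2) * (4 * G) := by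
        gcongr
        exact abs_mul_sub_one_le n
    _ = 48 * exp c * ((n.natAbs : ℝ) ^ 2 * exp (-c) ^ n.natAbs) := by ring

end Region

section Series

variable {σ y₀ y a b : ℝ}

lemma hasDerivAt_tsum_qTerm_b (hσ : 0 < σ) (ha : a < min y y₀) (hb : max y y₀ < b) :
    HasDerivAt (fun b => ∑' n, qTerm σ y₀ y a b n) (∑' n, qTermDerivB σ y₀ y a b n) b := by
  have hδ : 0 < max y y₀ - a := sub_pos.2 (ha.trans_le min_le_max)
  set c := ((max y y₀ - a) / σ) ^ 2
  have hc : 0 < c := by positivity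
  have hcT : ∀ b' ∈ Ioi (max y y₀), c * σ ^ 2 ≤ (b' - a) ^ 2 := fun b' hb' =>
    sq_div_mul_sq_le hσ.ne' hδ.le (by linarith [mem_Ioi.1 hb'])
  have hr : exp (-c) < 1 := exp_lt_one_iff.2 (neg_neg_of_pos hc)
  refine hasDerivAt_tsum_of_isPreconnected
    ((summable_natAbs_pow_mul_geometric 1 (exp_nonneg _) hr).mul_left (8 / σ * exp c))
    isOpen_Ioi isPreconnected_Ioi (fun n b' _ => hasDerivAt_qTerm_b σ y₀ y a b' n)
    (fun n b' hb' => by simpa using abs_qTermDerivB_le hσ ha hb' hc.le (hcT b' hb') n)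
    hb ?_ hb
  refine .of_norm_bounded
    ((summable_natAbs_pow_mul_geometric 0 (exp_nonneg _) hr).mul_left (2 * exp c)) fun n => ?_
  simpa using abs_qTerm_le hσ ha hb hc.le (hcT b hb) n

lemma hasDerivAt_tsum_qTermDerivB_a (hσ : 0 < σ) (ha : a < min y y₀) (hb : max y y₀ < b) :
    HasDerivAt (fun a => ∑' n, qTermDerivB σ y₀ y a b n) (∑' n, -(pTerm σ y₀ y a b n / σ ^ 2))
      a := by
  have hδ : 0 < b - min y y₀ := sub_pos.2 (min_le_max.trans_lt hb)
  set c := ((b - min y y₀) / σ) ^ 2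
  have hc : 0 < c := by positivity
  have hcT : ∀ a' ∈ Iio (min y y₀), c * σ ^ 2 ≤ (b - a') ^ 2 := fun a' ha' =>
    sq_div_mul_sq_le hσ.ne' hδ.le (by linarith [mem_Iio.1 ha'])
  have hr : exp (-c) < 1 := exp_lt_one_iff.2 (neg_neg_of_pos hc)
  refine hasDerivAt_tsum_of_isPreconnected
    (((summable_natAbs_pow_mul_geometric 2 (exp_nonneg _) hr).mul_left (48 * exp c)).div_const
      (σ ^ 2))
    isOpen_Iio isPreconnected_Iio (fun n a' _ => hasDerivAt_qTermDerivB_a σ y₀ y a' b n)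
    (fun n a' ha' => ?_) ha ?_ ha
  · rw [norm_neg, norm_div, norm_of_nonneg (sq_nonneg σ), Real.norm_eq_abs]
    gcongr
    exact abs_pTerm_le hσ ha' hb hc.le (hcT a' ha') n
  · refine .of_norm_bounded
      ((summable_natAbs_pow_mul_geometric 1 (exp_nonneg _) hr).mul_left (8 / σ * exp c))
      fun n => ?_
    simpa using abs_qTermDerivB_le hσ ha hb hc.le (hcT a ha) n

end Series

/-- For `a < min(y, y₀)` and `b > max(y, y₀)`, the mixed second partial derivative of `q`
in `(a, b)` exists (first in `b`, then in `a`) and satisfies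
`−∂²q/(∂a ∂b)(y, a, b | y₀) = p(a, b, y | y₀)`. -/
theorem mixed_partial_q_eq_density (μ σ y₀ y : ℝ) (hσ : 0 < σ)
    (a b : ℝ) (ha : a < min y y₀) (hb : max y y₀ < b) :
    (∀ a' : ℝ, a' < min y y₀ →
        DifferentiableAt ℝ (fun b' => qCHLO μ σ y₀ a' b' y) b) ∧
      HasDerivAt (fun a' => deriv (fun b' => qCHLO μ σ y₀ a' b' y) b)
        (-(pCHLO μ σ y₀ a b y)) a := by
  set C := 1 / (√(2 * π) * σ) * exp (-(μ ^ 2 - 2 * μ * (y - y₀)) / (2 * σ ^ 2))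
    with hC
  have hderivB : ∀ a' < min y y₀, HasDerivAt (fun b' => qCHLO μ σ y₀ a' b' y)
      (C * ∑' n, qTermDerivB σ y₀ y a' b n) b :=
    fun a' ha' => (hasDerivAt_tsum_qTerm_b hσ ha' hb).const_mul C
  refine ⟨fun a' ha' => (hderivB a' ha').differentiableAt, ?_⟩
  have hderiv_eq : (fun a' => deriv (fun b' => qCHLO μ σ y₀ a' b' y) b)
      =ᶠ[nhds a] fun a' => C * ∑' n, qTermDerivB σ y₀ y a' b n :=
    (eventually_lt_nhds ha).mono fun a' ha' => (hderivB a' ha').deriv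
  have hp : C * ∑' n, -(pTerm σ y₀ y a b n / σ ^ 2) = -pCHLO μ σ y₀ a b y := by
    rw [tsum_neg, tsum_div_const, hC]
    unfold pCHLO pTerm
    ring
  exact hp ▸ ((hasDerivAt_tsum_qTermDerivB_a hσ ha hb).const_mul C).congr_of_eventuallyEq
    hderiv_eq
end

section
/- Fix μ ∈ ℝ, σ > 0, y₀ ∈ ℝ and y ∈ ℝ, and for a < b define q(y, a, b | y₀) = (1/(√(2π) σ)) exp(−(μ² − 2μ(y − y₀))/(2σ²)) Σ_{n∈ℤ} (exp(−d₁(n)) − exp(−d₂(n))), where d₁(n) = (y − y₀ − 2n(b − a))²/(2σ²) and d₂(n) = (y + y₀ − 2a − 2n(b − a))²/(2σ²). Then as a → −∞ and b → +∞ (jointly, i.e. along the product filter), q(y, a, b | y₀) converges to the Gaussian density with mean y₀ + μ and variance σ² evaluated at y, namely (1/(√(2π) σ)) exp(−(y − y₀ − μ)²/(2σ²)). -/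
open MeasureTheory Filter Set

/-!
Apart from the drift factor, `q` is a difference of two Gaussian sums over the lattice of images
`∑ₙ exp (-(z - 2nL)² / (2σ²))`, `L = b - a`: one with `z = y - y₀` (images of the starting
point) and one with `z = y + y₀ - 2a` (images of its reflection in the wall `a`). As `a → -∞` and
`b → ∞` every image recedes to infinity except the starting point itself, so only the `n = 0`
term of the first sum survives. Eventually `|z - 2nL| ≥ |n|` for all `n` in both sums, so
each term is dominated by `r ^ |n|` with `r = exp (-1 / (2σ²)) < 1`, and Tannery's theorem
exchanges limit and sum. Completing the square in the drift factor times the surviving term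
gives the Gaussian density.
-/

open Real Topology

section GaussianTerms

variable {c : ℝ}

lemma exp_neg_sq_div_le_pow_natAbs (hc : 0 < c) {x : ℝ} {n : ℤ} (hx : |(n : ℝ)| ≤ |x|) :
    exp (-(x ^ 2 / c)) ≤ exp (-(1 / c)) ^ n.natAbs := by
  have hk : (n.natAbs : ℝ) = |(n : ℝ)| := by rw [Nat.cast_natAbs, Int.cast_abs]
  have hkx : (n.natAbs : ℝ) ≤ x ^ 2 := calc
    (n.natAbs : ℝ) ≤ (n.natAbs : ℝ) ^ 2 := by exact_mod_cast Nat.le_self_pow two_ne_zero _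
    _ ≤ x ^ 2 := by rw [← sq_abs x, hk]; gcongr
  rw [← exp_nat_mul, exp_le_exp, mul_neg, mul_one_div, neg_le_neg_iff]
  gcongr

lemma abs_exp_neg_sq_div_sub_le (hc : 0 < c) {x₁ x₂ : ℝ} {n : ℤ} (h₁ : |(n : ℝ)| ≤ |x₁|)
    (h₂ : |(n : ℝ)| ≤ |x₂|) :
    |exp (-(x₁ ^ 2 / c)) - exp (-(x₂ ^ 2 / c))| ≤ exp (-(1 / c)) ^ n.natAbs :=
  abs_sub_le_of_nonneg_of_le (exp_pos _).le (exp_neg_sq_div_le_pow_natAbs hc h₁)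
    (exp_pos _).le (exp_neg_sq_div_le_pow_natAbs hc h₂)

lemma tendsto_exp_neg_sq_div_zero {α : Type*} {l : Filter α} (hc : 0 < c) {x δ : α → ℝ}
    (hδ : Tendsto δ l atTop) (hx : ∀ v, δ v ≤ |x v|) :
    Tendsto (fun v => exp (-(x v ^ 2 / c))) l (𝓝 0) := by
  have habs : Tendsto (fun v => |x v|) l atTop := tendsto_atTop_mono hx hδ
  have hsq : Tendsto (fun v => x v ^ 2 / c) l atTop := by
    simpa only [Function.comp_def, sq_abs] using
      ((tendsto_pow_atTop two_ne_zero).comp habs).atTop_div_const hc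
  exact tendsto_exp_atBot.comp (tendsto_neg_atTop_atBot.comp hsq)

end GaussianTerms

lemma summable_pow_natAbs {r : ℝ} (h₀ : 0 ≤ r) (h₁ : r < 1) :
    Summable fun n : ℤ => r ^ n.natAbs :=
  .of_nat_of_neg (by simpa using summable_geometric_of_lt_one h₀ h₁)
    (by simpa using summable_geometric_of_lt_one h₀ h₁)

lemma abs_intCast_mul_le_abs_sub_two_mul (n : ℤ) (z L : ℝ) :
    |(n : ℝ)| * (2 * L - |z|) ≤ |z - 2 * n * L| := by
  rcases eq_or_ne n 0 with rfl | hn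
  · simp
  have hn₁ : 1 ≤ |(n : ℝ)| := by exact_mod_cast Int.one_le_abs hn
  have h := abs_sub_abs_le_abs_sub (2 * n * L) z
  rw [abs_sub_comm, abs_mul, abs_mul, abs_two] at h
  nlinarith [le_abs_self L, abs_nonneg z]

/- `z - 2nL = (1 - n) z + n (z - 2L)`, and for an integer `n` the two terms have the same sign. -/
lemma abs_add_abs_sub_one_mul_le_abs_sub_two_mul (n : ℤ) {z L δ : ℝ}
    (hz : z ∈ Icc δ (2 * L - δ)) :
    (|(n : ℝ)| + |(n : ℝ) - 1|) * δ ≤ |z - 2 * n * L| := by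
  rcases le_or_gt n 0 with hn | hn
  · have hn' : (n : ℝ) ≤ 0 := by exact_mod_cast hn
    rw [abs_of_nonpos hn', abs_of_nonpos (by linarith)]
    nlinarith [le_abs_self (z - 2 * n * L), hz.1, hz.2]
  · have hn' : (1 : ℝ) ≤ n := by exact_mod_cast hn
    rw [abs_of_nonneg (by linarith), abs_of_nonneg (by linarith)]
    nlinarith [neg_le_abs (z - 2 * n * L), hz.1, hz.2]

lemma tendsto_two_mul_snd_sub_fst_sub_atTop (C : ℝ) :
    Tendsto (fun v : ℝ × ℝ => 2 * (v.2 - v.1) - C) (atBot ×ˢ atTop) atTop := by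
  have hL : Tendsto (fun v : ℝ × ℝ => v.2 - v.1) (atBot ×ˢ atTop) atTop := by
    simpa only [sub_eq_add_neg, Function.comp_def] using
      tendsto_snd.atTop_add_atTop (tendsto_neg_atBot_atTop.comp tendsto_fst)
  simpa only [sub_eq_add_neg] using
    tendsto_atTop_add_const_right _ (-C) (hL.const_mul_atTop two_pos)

lemma tendsto_two_mul_min_neg_fst_snd_sub_atTop (C : ℝ) :
    Tendsto (fun v : ℝ × ℝ => 2 * min (-v.1) v.2 - C) (atBot ×ˢ atTop) atTop := by
  have hm : Tendsto (fun v : ℝ × ℝ => min (-v.1) v.2) (atBot ×ˢ atTop) atTop :=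
    tendsto_inf_atTop _ (tendsto_neg_atBot_atTop.comp tendsto_fst) tendsto_snd
  simpa only [sub_eq_add_neg] using
    tendsto_atTop_add_const_right _ (-C) (hm.const_mul_atTop two_pos)

section ImageSums

variable {σ : ℝ} (y₀ y : ℝ)

lemma tendsto_exp_neg_d1 (hσ : σ ≠ 0) (n : ℤ) :
    Tendsto (fun v : ℝ × ℝ => exp (-d1 σ y₀ y v.1 v.2 n)) (atBot ×ˢ atTop)
      (𝓝 ((Pi.single 0 (exp (-((y - y₀) ^ 2 / (2 * σ ^ 2)))) : ℤ → ℝ) n)) := by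
  rcases eq_or_ne n 0 with rfl | hn
  · simp only [d1, Int.cast_zero, mul_zero, zero_mul, sub_zero, Pi.single_eq_same]
    exact tendsto_const_nhds
  rw [Pi.single_eq_of_ne hn]
  have hn' : 0 < |(n : ℝ)| := abs_pos.mpr (Int.cast_ne_zero.mpr hn)
  exact tendsto_exp_neg_sq_div_zero (by positivity)
    ((tendsto_two_mul_snd_sub_fst_sub_atTop |y - y₀|).const_mul_atTop hn')
    fun v => abs_intCast_mul_le_abs_sub_two_mul n _ _

lemma eventually_abs_intCast_le_abs_d1_arg :
    ∀ᶠ v : ℝ × ℝ in atBot ×ˢ atTop, ∀ n : ℤ, |(n : ℝ)| ≤ |y - y₀ - 2 * n * (v.2 - v.1)| := by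
  filter_upwards [(tendsto_two_mul_snd_sub_fst_sub_atTop |y - y₀|).eventually_ge_atTop 1]
    with v hv n
  exact (le_mul_of_one_le_right (abs_nonneg _) hv).trans
    (abs_intCast_mul_le_abs_sub_two_mul n _ _)

lemma add_sub_two_mul_mem_Icc (v : ℝ × ℝ) :
    y + y₀ - 2 * v.1 ∈ Icc (2 * min (-v.1) v.2 - |y + y₀|)
      (2 * (v.2 - v.1) - (2 * min (-v.1) v.2 - |y + y₀|)) := by
  constructor <;> linarith [min_le_left (-v.1) v.2, min_le_right (-v.1) v.2,
    neg_abs_le (y + y₀), le_abs_self (y + y₀)]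

lemma one_le_abs_add_abs_sub_one (x : ℝ) : 1 ≤ |x| + |x - 1| := by
  simpa using abs_sub x (x - 1)

lemma tendsto_exp_neg_d2 (hσ : σ ≠ 0) (n : ℤ) :
    Tendsto (fun v : ℝ × ℝ => exp (-d2 σ y₀ y v.1 v.2 n)) (atBot ×ˢ atTop) (𝓝 0) := by
  have hn : 0 < |(n : ℝ)| + |(n : ℝ) - 1| := one_pos.trans_le (one_le_abs_add_abs_sub_one _)
  exact tendsto_exp_neg_sq_div_zero (by positivity)
    ((tendsto_two_mul_min_neg_fst_snd_sub_atTop |y + y₀|).const_mul_atTop hn)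
    fun v => abs_add_abs_sub_one_mul_le_abs_sub_two_mul n (add_sub_two_mul_mem_Icc y₀ y v)

lemma eventually_abs_intCast_le_abs_d2_arg :
    ∀ᶠ v : ℝ × ℝ in atBot ×ˢ atTop, ∀ n : ℤ,
      |(n : ℝ)| ≤ |y + y₀ - 2 * v.1 - 2 * n * (v.2 - v.1)| := by
  filter_upwards [(tendsto_two_mul_min_neg_fst_snd_sub_atTop |y + y₀|).eventually_ge_atTop 1]
    with v hv n
  calc |(n : ℝ)| ≤ |(n : ℝ)| + |(n : ℝ) - 1| := le_add_of_nonneg_right (abs_nonneg _)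
    _ ≤ (|(n : ℝ)| + |(n : ℝ) - 1|) * (2 * min (-v.1) v.2 - |y + y₀|) :=
      le_mul_of_one_le_right (by positivity) hv
    _ ≤ _ := abs_add_abs_sub_one_mul_le_abs_sub_two_mul n (add_sub_two_mul_mem_Icc y₀ y v)

end ImageSums

lemma exp_drift_mul_exp_neg_sq_div (μ w c : ℝ) :
    exp (-(μ ^ 2 - 2 * μ * w) / c) * exp (-(w ^ 2 / c)) = exp (-(w - μ) ^ 2 / c) := by
  rw [← exp_add]
  ring_nf

/-- As `a → −∞` and `b → +∞` jointly (along the product filter), `q(y, a, b | y₀)`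
converges to the Gaussian density with mean `y₀ + μ` and variance `σ²` evaluated at `y`. -/
theorem q_tendsto_gaussian (μ σ y₀ y : ℝ) (hσ : 0 < σ) :
    Tendsto (fun v : ℝ × ℝ => qCHLO μ σ y₀ v.1 v.2 y) (atBot ×ˢ atTop)
      (nhds ((1 / (Real.sqrt (2 * Real.pi) * σ)) *
        Real.exp (-(y - y₀ - μ) ^ 2 / (2 * σ ^ 2)))) := by
  have hc : 0 < 2 * σ ^ 2 := by positivity
  have hterm (n : ℤ) : Tendsto
      (fun v : ℝ × ℝ => exp (-d1 σ y₀ y v.1 v.2 n) - exp (-d2 σ y₀ y v.1 v.2 n))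
      (atBot ×ˢ atTop) (𝓝 ((Pi.single 0 (exp (-((y - y₀) ^ 2 / (2 * σ ^ 2)))) : ℤ → ℝ) n)) := by
    simpa only [sub_zero] using
      (tendsto_exp_neg_d1 y₀ y hσ.ne' n).sub (tendsto_exp_neg_d2 y₀ y hσ.ne' n)
  have hdom : ∀ᶠ v : ℝ × ℝ in atBot ×ˢ atTop, ∀ n : ℤ,
      ‖exp (-d1 σ y₀ y v.1 v.2 n) - exp (-d2 σ y₀ y v.1 v.2 n)‖ ≤
        exp (-(1 / (2 * σ ^ 2))) ^ n.natAbs := by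
    filter_upwards [eventually_abs_intCast_le_abs_d1_arg y₀ y,
      eventually_abs_intCast_le_abs_d2_arg y₀ y] with v h₁ h₂ n
    exact abs_exp_neg_sq_div_sub_le hc (h₁ n) (h₂ n)
  have hr : exp (-(1 / (2 * σ ^ 2))) < 1 := exp_lt_one_iff.mpr (neg_lt_zero.mpr (by positivity))
  have hsum := tendsto_tsum_of_dominated_convergence
    (summable_pow_natAbs (exp_pos _).le hr) hterm hdom
  rw [tsum_pi_single] at hsum
  have hq := hsum.const_mul
    (1 / (√(2 * π) * σ) * exp (-(μ ^ 2 - 2 * μ * (y - y₀)) / (2 * σ ^ 2)))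
  rwa [mul_assoc _ (exp _), exp_drift_mul_exp_neg_sq_div] at hq
end
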